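/- Let Δ ∈ MvPolynomial (Fin 4) ℂ be the discriminant Δ = 3(3p₀p₃ − p₁p₂)² + 4(p₀p₂³ + p₁³p₃) − 4p₁²p₂² in the variables p₀, p₁, p₂, p₃. For (p₀,p₁,p₂,p₃) ∈ ℂ⁴, all four partial derivatives ∂Δ/∂p₀, ∂Δ/∂p₁, ∂Δ/∂p₂, ∂Δ/∂p₃ vanish at (p₀,p₁,p₂,p₃) if and only if there exist a, b ∈ ℂ with (p₀,p₁,p₂,p₃) = (a³, 3a²b, 3ab², b³), i.e. if and only if the binary cubic form p₀x³ + p₁x²y + p₂xy² + p₃y³ is the cube (ax + by)³ of a linear form. In other words, the singular locus of the discriminant hypersurface {Δ = 0} ⊂ ℙ³ is exactly the twisted cubic v₃(ℙ¹) of perfect cubes, and the first derivatives of the quartic invariant cut out the closed orbit v₃(ℙ¹) = σ₊(v₃(ℙ¹)) set-theoretically. -/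

import Mathlib

open MvPolynomial

/-- The discriminant `Δ = 3(3p₀p₃ − p₁p₂)² + 4(p₀p₂³ + p₁³p₃) − 4p₁²p₂²` as a polynomial
in the four coefficients `p₀, p₁, p₂, p₃`. -/
noncomputable def Disc : MvPolynomial (Fin 4) ℂ :=
  3 * (3 * X 0 * X 3 - X 1 * X 2) ^ 2 + 4 * (X 0 * X 2 ^ 3 + X 1 ^ 3 * X 3)
    - 4 * X 1 ^ 2 * X 2 ^ 2

/-!
The four partials of `Δ` satisfy `3p₀ ∂₂Δ + p₁ ∂₃Δ = 4(p₁² − 3p₀p₂)²` and, symmetrically,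
`3p₃ ∂₁Δ + p₂ ∂₀Δ = 4(p₂² − 3p₁p₃)²`. So on the common zero set of the partials the first two
quadrics defining the twisted cubic vanish; feeding them back into `∂₃Δ` and `∂₀Δ` leaves
`6p₀(9p₀p₃ − p₁p₂)` and `6p₃(9p₀p₃ − p₁p₂)`, which gives the third
unless `p₀ = p₃ = 0`, when the first forces `p₁ = 0`. Conversely the three quadrics
cut out the cubes `(a³, 3a²b, 3ab², b³)`: take `a = ∛p₀` and `b = p₁ / 3a²`.
-/

@[simp]
theorem Derivation.map_ofNat {R A M : Type*} [CommSemiring R] [CommSemiring A] [AddCommMonoid M]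
    [Algebra R A] [Module A M] [Module R M] (D : Derivation R A M) (n : ℕ) [n.AtLeastTwo] :
    D (no_index (OfNat.ofNat n : A)) = 0 := by
  rw [← Nat.cast_ofNat, D.map_natCast]

section Partials

variable (p : Fin 4 → ℂ)

theorem eval_pderiv_zero_disc :
    eval p (pderiv 0 Disc) = 18 * p 3 * (3 * p 0 * p 3 - p 1 * p 2) + 4 * p 2 ^ 3 := by
  simp [Disc]
  ring

theorem eval_pderiv_one_disc :
    eval p (pderiv 1 Disc) =
      -6 * p 2 * (3 * p 0 * p 3 - p 1 * p 2) + 12 * p 1 ^ 2 * p 3 - 8 * p 1 * p 2 ^ 2 := by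
  simp [Disc]
  ring

theorem eval_pderiv_two_disc :
    eval p (pderiv 2 Disc) =
      -6 * p 1 * (3 * p 0 * p 3 - p 1 * p 2) + 12 * p 0 * p 2 ^ 2 - 8 * p 1 ^ 2 * p 2 := by
  simp [Disc]
  ring

theorem eval_pderiv_three_disc :
    eval p (pderiv 3 Disc) = 18 * p 0 * (3 * p 0 * p 3 - p 1 * p 2) + 4 * p 1 ^ 3 := by
  simp [Disc]
  ring

theorem eval_pderiv_disc_eq_zero_of_eq_cube (a b : ℂ) (h₀ : p 0 = a ^ 3)
    (h₁ : p 1 = 3 * a ^ 2 * b) (h₂ : p 2 = 3 * a * b ^ 2) (h₃ : p 3 = b ^ 3) (i : Fin 4) :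
    eval p (pderiv i Disc) = 0 := by
  fin_cases i <;>
    simp only [Fin.zero_eta, Fin.mk_one, Fin.reduceFinMk, eval_pderiv_zero_disc,
      eval_pderiv_one_disc, eval_pderiv_two_disc, eval_pderiv_three_disc, h₀, h₁, h₂, h₃] <;>
    ring

theorem twistedCubic_eqns_of_eval_pderiv_disc_eq_zero
    (h : ∀ i : Fin 4, eval p (pderiv i Disc) = 0) :
    p 1 ^ 2 = 3 * p 0 * p 2 ∧ p 2 ^ 2 = 3 * p 1 * p 3 ∧ p 1 * p 2 = 9 * p 0 * p 3 := by
  have d₀ := eval_pderiv_zero_disc p ▸ h 0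
  have d₁ := eval_pderiv_one_disc p ▸ h 1
  have d₂ := eval_pderiv_two_disc p ▸ h 2
  have d₃ := eval_pderiv_three_disc p ▸ h 3
  have q₁ : p 1 ^ 2 = 3 * p 0 * p 2 := by
    have : (p 1 ^ 2 - 3 * p 0 * p 2) ^ 2 = 0 := by
      linear_combination (3 / 4 * p 0) * d₂ + (1 / 4 * p 1) * d₃
    linear_combination pow_eq_zero_iff two_ne_zero |>.mp this
  have q₂ : p 2 ^ 2 = 3 * p 1 * p 3 := by
    have : (p 2 ^ 2 - 3 * p 1 * p 3) ^ 2 = 0 := by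
      linear_combination (3 / 4 * p 3) * d₁ + (1 / 4 * p 2) * d₀
    linear_combination pow_eq_zero_iff two_ne_zero |>.mp this
  refine ⟨q₁, q₂, ?_⟩
  have e₀ : p 3 * (9 * p 0 * p 3 - p 1 * p 2) = 0 := by
    linear_combination (1 / 6) * d₀ - (2 / 3 * p 2) * q₂
  have e₃ : p 0 * (9 * p 0 * p 3 - p 1 * p 2) = 0 := by
    linear_combination (1 / 6) * d₃ - (2 / 3 * p 1) * q₁
  by_cases hp₀ : p 0 = 0
  · by_cases hp₃ : p 3 = 0
    · have hp₁ : p 1 = 0 := pow_eq_zero_iff two_ne_zero |>.mp (by rw [q₁, hp₀]; ring)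
      rw [hp₀, hp₁]; ring
    · linear_combination -((mul_eq_zero.mp e₀).resolve_left hp₃)
  · linear_combination -((mul_eq_zero.mp e₃).resolve_left hp₀)

end Partials

theorem exists_eq_cube_of_twistedCubic_eqns {K : Type*} [Field K] [IsAlgClosed K]
    (h3 : (3 : K) ≠ 0) {p₀ p₁ p₂ p₃ : K} (q₁ : p₁ ^ 2 = 3 * p₀ * p₂)
    (q₂ : p₂ ^ 2 = 3 * p₁ * p₃) (q₃ : p₁ * p₂ = 9 * p₀ * p₃) :
    ∃ a b : K, p₀ = a ^ 3 ∧ p₁ = 3 * a ^ 2 * b ∧ p₂ = 3 * a * b ^ 2 ∧ p₃ = b ^ 3 := by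
  by_cases hp₀ : p₀ = 0
  · have hp₁ : p₁ = 0 := pow_eq_zero_iff two_ne_zero |>.mp (by rw [q₁, hp₀]; ring)
    have hp₂ : p₂ = 0 := pow_eq_zero_iff two_ne_zero |>.mp (by rw [q₂, hp₁]; ring)
    obtain ⟨b, hb⟩ := IsAlgClosed.exists_pow_nat_eq p₃ three_pos
    exact ⟨0, b, by simp [hp₀], by simp [hp₁], by simp [hp₂], hb.symm⟩
  · obtain ⟨a, ha⟩ := IsAlgClosed.exists_pow_nat_eq p₀ three_pos
    have ha₀ : a ≠ 0 := by rintro rfl; exact hp₀ (by simp [← ha])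
    subst ha
    refine ⟨a, p₁ / (3 * a ^ 2), rfl, by field_simp, ?_, ?_⟩
    · field_simp
      linear_combination -q₁
    · field_simp
      linear_combination (-p₁) * q₁ - (3 * a ^ 3) * q₃

/-- All four partial derivatives of the discriminant `Δ` vanish at `(p₀,p₁,p₂,p₃)` if and
only if the binary cubic `p₀x³ + p₁x²y + p₂xy² + p₃y³` is the cube of a linear form: the
singular locus of `{Δ = 0}` is the twisted cubic. -/
theorem stmt6 (p : Fin 4 → ℂ) :
    (∀ i : Fin 4, MvPolynomial.eval p (MvPolynomial.pderiv i Disc) = 0) ↔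
    ∃ a b : ℂ, p 0 = a ^ 3 ∧ p 1 = 3 * a ^ 2 * b ∧ p 2 = 3 * a * b ^ 2 ∧ p 3 = b ^ 3 := by
  constructor
  · intro h
    obtain ⟨q₁, q₂, q₃⟩ := twistedCubic_eqns_of_eval_pderiv_disc_eq_zero p h
    exact exists_eq_cube_of_twistedCubic_eqns three_ne_zero q₁ q₂ q₃
  · rintro ⟨a, b, h₀, h₁, h₂, h₃⟩
    exact eval_pderiv_disc_eq_zero_of_eq_cube p a b h₀ h₁ h₂ h₃
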